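/- For every connected graph G, γ_rdR(G) = γ(G) + γ_r(G) if and only if G is a star K_{1,n−1} or γ_r2(G) = γ_r(G) = γ(G). -/

import Mathlib

open Finset

/-- A restrained double Roman dominating function. -/
def IsRDRD {V : Type*} (G : SimpleGraph V) (f : V → ℕ) : Prop :=
  (∀ v, f v ≤ 3) ∧
  (∀ v, f v = 0 →
    (∃ u, G.Adj v u ∧ f u = 3) ∨
    (∃ u w, G.Adj v u ∧ G.Adj v w ∧ u ≠ w ∧ f u = 2 ∧ f w = 2)) ∧
  (∀ v, f v = 1 → ∃ u, G.Adj v u ∧ 2 ≤ f u) ∧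
  (∀ v, f v = 0 → ∃ u, G.Adj v u ∧ f u = 0)

/-- The restrained double Roman domination number. -/
noncomputable def rdrNum {V : Type*} [Fintype V] (G : SimpleGraph V) : ℕ :=
  sInf {k | ∃ f : V → ℕ, IsRDRD G f ∧ ∑ v, f v = k}

def IsDomSet {V : Type*} (G : SimpleGraph V) (S : Set V) : Prop :=
  ∀ v ∉ S, ∃ u ∈ S, G.Adj v u

def IsRDomSet {V : Type*} (G : SimpleGraph V) (S : Set V) : Prop :=
  IsDomSet G S ∧ ∀ v ∉ S, ∃ u ∉ S, G.Adj v u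

def IsR2DomSet {V : Type*} (G : SimpleGraph V) (S : Set V) : Prop :=
  (∀ v ∉ S, ∃ u w, u ∈ S ∧ w ∈ S ∧ u ≠ w ∧ G.Adj v u ∧ G.Adj v w) ∧
  ∀ v ∉ S, ∃ u ∉ S, G.Adj v u

noncomputable def domNum {V : Type*} [Fintype V] (G : SimpleGraph V) : ℕ :=
  sInf {k | ∃ S : Finset V, IsDomSet G ↑S ∧ S.card = k}

noncomputable def rDomNum {V : Type*} [Fintype V] (G : SimpleGraph V) : ℕ :=
  sInf {k | ∃ S : Finset V, IsRDomSet G ↑S ∧ S.card = k}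

noncomputable def r2DomNum {V : Type*} [Fintype V] (G : SimpleGraph V) : ℕ :=
  sInf {k | ∃ S : Finset V, IsR2DomSet G ↑S ∧ S.card = k}

/-- A restrained Roman dominating function. -/
def IsRRD {V : Type*} (G : SimpleGraph V) (f : V → ℕ) : Prop :=
  (∀ v, f v ≤ 2) ∧
  (∀ v, f v = 0 → ∃ u, G.Adj v u ∧ f u = 2) ∧
  (∀ v, f v = 0 → ∃ u, G.Adj v u ∧ f u = 0)

noncomputable def rrNum {V : Type*} [Fintype V] (G : SimpleGraph V) : ℕ :=
  sInf {k | ∃ f : V → ℕ, IsRRD G f ∧ ∑ v, f v = k}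

/-- A star: all edges are incident to one common vertex. -/
def IsStar {V : Type*} (G : SimpleGraph V) : Prop :=
  ∃ x : V, ∀ ⦃a b : V⦄, G.Adj a b → a = x ∨ b = x

/-- The join of two graphs. -/
def joinG {α β : Type*} (G : SimpleGraph α) (H : SimpleGraph β) : SimpleGraph (α ⊕ β) :=
  SimpleGraph.fromRel (fun x y => match x, y with
    | Sum.inl a, Sum.inl b => G.Adj a b
    | Sum.inr a, Sum.inr b => H.Adj a b
    | Sum.inl _, Sum.inr _ => True
    | Sum.inr _, Sum.inl _ => True)

/-- The disjoint union of two graphs. -/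
def dUnion {α β : Type*} (G : SimpleGraph α) (H : SimpleGraph β) : SimpleGraph (α ⊕ β) :=
  SimpleGraph.fromRel (fun x y => match x, y with
    | Sum.inl a, Sum.inl b => G.Adj a b
    | Sum.inr a, Sum.inr b => H.Adj a b
    | _, _ => False)

/-!
If `f` is a restrained double Roman dominating function, the vertices of weight at least `2`
dominate, those of weight at least `1` form a restrained dominating set, and
`w(f) ≥ |V_{≥2}| + |V_{≥1}| + |V_{≥3}|`; hence `γ + γ_r ≤ γ_rdR`. The bound is attained by
weight `2` on a `γ_r2`-set when `γ_r2 = γ_r = γ`, and by weight `2` on the centre and `1`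
elsewhere when `G` is a star (where `γ = 1` and `γ_r = n`).

Conversely, if `γ_rdR = γ + γ_r`, a minimum `f` takes no value `3`, so `V_{≥1}` is a minimum
restrained dominating set that 2-dominates. If `f` takes no value `1`, then `V_{≥1} = V_{≥2}`
and `γ_r2 ≤ γ = γ_r ≤ γ_r2`. Otherwise `V_{≥1}` contains an edge. By minimality no vertex of
`V_{≥1}` has neighbours both inside and outside it, so by connectivity `V_{≥1} = V` and
`γ_r = n`. Then every edge has an endpoint of degree one, since otherwise removing both
endpoints would leave a smaller restrained dominating set, and a connected graph of this kind is
a star.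
-/

namespace SimpleGraph

variable {V : Type*} {G : SimpleGraph V}

theorem Connected.mem_of_adj_closed (hG : G.Connected) {A : Set V}
    (hA : ∀ ⦃u v⦄, G.Adj u v → u ∈ A → v ∈ A) {u : V} (hu : u ∈ A) (v : V) : v ∈ A := by
  obtain ⟨p⟩ := hG.preconnected u v
  induction p with
  | nil => exact hu
  | cons huw _ ih => exact ih (hA huw hu)

end SimpleGraph

theorem Nat.exists_apply_eq_sInf {α : Type*} {p : α → Prop} (c : α → ℕ) (h : ∃ a, p a) :
    ∃ a, p a ∧ c a = sInf {k | ∃ a, p a ∧ c a = k} :=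
  Nat.sInf_mem (s := {k | ∃ a, p a ∧ c a = k}) (h.elim fun a ha => ⟨c a, a, ha, rfl⟩)

section

variable {V : Type*} {G : SimpleGraph V}

theorem IsStar.exists_isUniversal (h : IsStar G) (hG : G.Connected) : ∃ x, G.IsUniversal x := by
  obtain ⟨x, hx⟩ := h
  refine ⟨x, fun w hxw => ?_⟩
  obtain ⟨p⟩ := hG.preconnected w x
  cases p with
  | nil => exact absurd rfl hxw
  | cons hwy _ => exact ((hx hwy).resolve_left hxw.symm ▸ hwy).symm

theorem isStar_of_forall_adj_pendant (hG : G.Connected)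
    (h : ∀ ⦃a b⦄, G.Adj a b → (∀ c, G.Adj a c → c = b) ∨ (∀ c, G.Adj b c → c = a)) :
    IsStar G := by
  by_cases hE : ∃ a b, G.Adj a b
  · obtain ⟨x, y, hyx, hy⟩ : ∃ x y, G.Adj y x ∧ ∀ c, G.Adj y c → c = x := by
      obtain ⟨a, b, hab⟩ := hE
      rcases h hab with ha | hb
      exacts [⟨b, a, hab, ha⟩, ⟨a, b, hab.symm, hb⟩]
    have hball : ∀ v, v = x ∨ G.Adj x v := by
      refine hG.mem_of_adj_closed (A := {v | v = x ∨ G.Adj x v}) ?_ (Or.inl rfl)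
      rintro u v huv (rfl | hxu)
      · exact Or.inr huv
      · rcases h hxu with hx | hu
        · exact Or.inl ((hy v (hx y hyx.symm ▸ huv)).symm ▸ rfl)
        · exact Or.inl (hu v huv)
    refine ⟨x, fun p q hpq => ?_⟩
    rcases hball p with rfl | hxp
    · exact Or.inl rfl
    rcases h hxp with hx | hp
    · rcases hball q with rfl | hxq
      · exact Or.inr rfl
      · exact (hpq.ne (hx q hxq).symm).elim
    · exact Or.inr (hp q hpq)
  · simp only [not_exists] at hE
    obtain ⟨x⟩ := hG.nonempty
    exact ⟨x, fun a b hab => absurd hab (hE a b)⟩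

theorem IsR2DomSet.isRDomSet {S : Set V} (hS : IsR2DomSet G S) : IsRDomSet G S := by
  refine ⟨fun v hv => ?_, hS.2⟩
  obtain ⟨u, -, hu, -, -, hvu, -⟩ := hS.1 v hv
  exact ⟨u, hu, hvu⟩

theorem IsR2DomSet.isRDomSet_diff_singleton {S : Set V} (hS : IsR2DomSet G S) {c s z : V}
    (hs : s ∈ S) (hcs : G.Adj c s) (hz : z ∉ S) (hcz : G.Adj c z) : IsRDomSet G (S \ {c}) := by
  have hzc : z ∉ S \ {c} := fun h => hz h.1
  refine ⟨fun v hv => ?_, fun v hv => ?_⟩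
  · by_cases hvc : v = c
    · subst hvc
      exact ⟨s, ⟨hs, hcs.ne'⟩, hcs⟩
    · have hvS : v ∉ S := fun h => hv ⟨h, hvc⟩
      obtain ⟨u, w, hu, hw, huw, hvu, hvw⟩ := hS.1 v hvS
      by_cases huc : u = c
      · exact ⟨w, ⟨hw, fun hwc => huw (huc.trans hwc.symm)⟩, hvw⟩
      · exact ⟨u, ⟨hu, huc⟩, hvu⟩
  · by_cases hvc : v = c
    · subst hvc
      exact ⟨z, hzc, hcz⟩
    · obtain ⟨u, hu, hvu⟩ := hS.2 v fun h => hv ⟨h, hvc⟩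
      exact ⟨u, fun h => hu h.1, hvu⟩

theorem IsRDRD.isDomSet {f : V → ℕ} (hf : IsRDRD G f) : IsDomSet G {v | 2 ≤ f v} := by
  intro v hv
  simp only [Set.mem_ofPred_eq, not_le] at hv
  obtain hv0 | hv1 : f v = 0 ∨ f v = 1 := by omega
  · rcases hf.2.1 v hv0 with ⟨u, hvu, hu⟩ | ⟨u, -, hvu, -, -, hu, -⟩
    exacts [⟨u, by simp [hu], hvu⟩, ⟨u, by simp [hu], hvu⟩]
  · obtain ⟨u, hvu, hu⟩ := hf.2.2.1 v hv1
    exact ⟨u, hu, hvu⟩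

theorem IsRDRD.isRDomSet {f : V → ℕ} (hf : IsRDRD G f) : IsRDomSet G {v | 1 ≤ f v} := by
  refine ⟨fun v hv => ?_, fun v hv => ?_⟩ <;> simp only [Set.mem_ofPred_eq, not_le,
    Nat.lt_one_iff] at hv
  · rcases hf.2.1 v hv with ⟨u, hvu, hu⟩ | ⟨u, -, hvu, -, -, hu, -⟩
    exacts [⟨u, by simp [hu], hvu⟩, ⟨u, by simp [hu], hvu⟩]
  · obtain ⟨u, hvu, hu⟩ := hf.2.2.2 v hv
    exact ⟨u, by simp [hu], hvu⟩

theorem IsRDRD.isR2DomSet {f : V → ℕ} (hf : IsRDRD G f) (hf2 : ∀ v, f v ≤ 2) :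
    IsR2DomSet G {v | 1 ≤ f v} := by
  refine ⟨fun v hv => ?_, hf.isRDomSet.2⟩
  simp only [Set.mem_ofPred_eq, not_le, Nat.lt_one_iff] at hv
  rcases hf.2.1 v hv with ⟨u, -, hu⟩ | ⟨u, w, hvu, hvw, huw, hu, hw⟩
  · exact absurd (hf2 u) (by omega)
  · exact ⟨u, w, by simp [hu], by simp [hw], huw, hvu, hvw⟩

end

section Fintype

variable {V : Type*} [Fintype V] {G : SimpleGraph V}

theorem domNum_le {S : Finset V} (hS : IsDomSet G S) : domNum G ≤ #S :=
  Nat.sInf_le ⟨S, hS, rfl⟩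

theorem rDomNum_le {S : Finset V} (hS : IsRDomSet G S) : rDomNum G ≤ #S :=
  Nat.sInf_le ⟨S, hS, rfl⟩

theorem r2DomNum_le {S : Finset V} (hS : IsR2DomSet G S) : r2DomNum G ≤ #S :=
  Nat.sInf_le ⟨S, hS, rfl⟩

theorem rdrNum_le {f : V → ℕ} (hf : IsRDRD G f) : rdrNum G ≤ ∑ v, f v :=
  Nat.sInf_le ⟨f, hf, rfl⟩

variable (G) in
theorem exists_isDomSet_card_eq_domNum : ∃ S : Finset V, IsDomSet G S ∧ #S = domNum G :=
  Nat.exists_apply_eq_sInf _ ⟨univ, fun v hv => absurd (mem_coe.2 (mem_univ v)) hv⟩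

variable (G) in
theorem exists_isRDomSet_card_eq_rDomNum : ∃ S : Finset V, IsRDomSet G S ∧ #S = rDomNum G :=
  Nat.exists_apply_eq_sInf _ ⟨univ, fun v hv => absurd (mem_coe.2 (mem_univ v)) hv,
    fun v hv => absurd (mem_coe.2 (mem_univ v)) hv⟩

variable (G) in
theorem exists_isR2DomSet_card_eq_r2DomNum :
    ∃ S : Finset V, IsR2DomSet G S ∧ #S = r2DomNum G :=
  Nat.exists_apply_eq_sInf _ ⟨univ, fun v hv => absurd (mem_coe.2 (mem_univ v)) hv,
    fun v hv => absurd (mem_coe.2 (mem_univ v)) hv⟩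

variable (G) in
theorem exists_isRDRD_sum_eq_rdrNum : ∃ f : V → ℕ, IsRDRD G f ∧ ∑ v, f v = rdrNum G :=
  Nat.exists_apply_eq_sInf _ ⟨fun _ => 2, fun _ => by simp, by simp, by simp, by simp⟩

variable (G) in
theorem one_le_domNum [Nonempty V] : 1 ≤ domNum G := by
  obtain ⟨S, hS, hcard⟩ := exists_isDomSet_card_eq_domNum G
  obtain ⟨v⟩ := ‹Nonempty V›
  rw [← hcard, Nat.one_le_iff_ne_zero, Ne, card_eq_zero]
  rintro rfl
  obtain ⟨u, hu, -⟩ := hS v (by simp)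
  simp at hu

variable (G) in
theorem rDomNum_le_r2DomNum : rDomNum G ≤ r2DomNum G := by
  obtain ⟨S, hS, hcard⟩ := exists_isR2DomSet_card_eq_r2DomNum G
  exact hcard ▸ rDomNum_le hS.isRDomSet

theorem card_filter_add_card_filter_add_card_filter_le_sum (f : V → ℕ) :
    #{v | 2 ≤ f v} + #{v | 1 ≤ f v} + #{v | 3 ≤ f v} ≤ ∑ v, f v := by
  simp only [card_filter, ← sum_add_distrib]
  exact sum_le_sum fun v _ => by split_ifs <;> omega

variable (G) in
theorem domNum_add_rDomNum_le_rdrNum : domNum G + rDomNum G ≤ rdrNum G := by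
  obtain ⟨f, hf, hsum⟩ := exists_isRDRD_sum_eq_rdrNum G
  have h2 := domNum_le (S := {v | 2 ≤ f v}) (by simpa using hf.isDomSet)
  have h1 := rDomNum_le (S := {v | 1 ≤ f v}) (by simpa using hf.isRDomSet)
  have := card_filter_add_card_filter_add_card_filter_le_sum f
  omega

variable (G) in
theorem rdrNum_le_two_mul_r2DomNum : rdrNum G ≤ 2 * r2DomNum G := by
  classical
  obtain ⟨S, hS, hcard⟩ := exists_isR2DomSet_card_eq_r2DomNum G
  refine (rdrNum_le (f := fun v => if v ∈ S then 2 else 0) ⟨?_, ?_, ?_, ?_⟩).trans ?_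
  · intro v; dsimp only; split_ifs <;> omega
  · intro v hv
    have hvS : v ∉ (S : Set V) := fun h => by simp_all
    obtain ⟨u, w, hu, hw, huw, hvu, hvw⟩ := hS.1 v hvS
    exact Or.inr ⟨u, w, hvu, hvw, huw, by simp_all, by simp_all⟩
  · intro v; dsimp only; split_ifs <;> simp
  · intro v hv
    obtain ⟨u, hu, hvu⟩ := hS.2 v fun h => by simp_all
    exact ⟨u, hvu, by simp_all⟩
  · rw [sum_ite_mem, univ_inter, sum_const, smul_eq_mul, hcard, mul_comm]

theorem IsStar.card_le_rDomNum (h : IsStar G) : Fintype.card V ≤ rDomNum G := by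
  obtain ⟨x, hx⟩ := h
  obtain ⟨S, hS, hcard⟩ := exists_isRDomSet_card_eq_rDomNum G
  suffices S = univ by rw [← hcard, this, card_univ]
  refine eq_univ_iff_forall.2 fun v => by_contra fun hv => ?_
  obtain ⟨w, hw, hvw⟩ := hS.2 v hv
  -- the endpoint of `v w` other than the centre can only be dominated by the centre
  have hcentre : ∀ y z, y ∉ (S : Set V) → z ∉ (S : Set V) → G.Adj y z → z ≠ x := by
    rintro y z hy hz hyz rfl
    obtain ⟨s, hs, hys⟩ := hS.1 y hy
    exact hz ((hx hys).resolve_left hyz.ne ▸ hs)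
  rcases hx hvw with rfl | rfl
  · exact hcentre w v hw hv hvw.symm rfl
  · exact hcentre v w hv hw hvw rfl

theorem rdrNum_le_card_add_one {x : V} (hx : G.IsUniversal x) :
    rdrNum G ≤ Fintype.card V + 1 := by
  classical
  refine (rdrNum_le (f := fun v => if v = x then 2 else 1) ⟨?_, ?_, ?_, ?_⟩).trans ?_
  · intro v; dsimp only; split_ifs <;> omega
  · intro v; dsimp only; split_ifs <;> simp
  · intro v hv
    have hvx : v ≠ x := by rintro rfl; simp at hv
    exact ⟨x, (hx hvx.symm).symm, by simp⟩
  · intro v; dsimp only; split_ifs <;> simp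
  · have := Fintype.card_pos_iff.2 ⟨x⟩
    rw [← add_sum_erase _ _ (mem_univ x), if_pos rfl,
      sum_congr rfl fun v hv => if_neg (ne_of_mem_erase hv), sum_const,
      card_erase_of_mem (mem_univ x), card_univ, smul_eq_mul, mul_one]
    omega

theorem IsR2DomSet.eq_univ_of_card_le_rDomNum (hG : G.Connected) {S : Finset V}
    (hS : IsR2DomSet G S) (hmin : #S ≤ rDomNum G) {u s : V} (hu : u ∈ S) (hs : s ∈ S)
    (hus : G.Adj u s) : S = univ := by
  classical
  have hclosed : ∀ ⦃c s⦄, c ∈ S → s ∈ S → G.Adj c s → ∀ z, G.Adj c z → z ∈ S := by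
    intro c s hc hs hcs z hcz
    by_contra hz
    have := rDomNum_le (S := S.erase c) (by
      simpa [coe_erase] using hS.isRDomSet_diff_singleton (mem_coe.2 hs) hcs hz hcz)
    have := card_erase_of_mem hc
    have := card_pos.2 ⟨c, hc⟩
    omega
  refine eq_univ_iff_forall.2 fun v =>
    (hG.mem_of_adj_closed (A := {v | v ∈ S ∧ ∃ s ∈ S, G.Adj v s}) ?_ ⟨hu, s, hs, hus⟩ v).1
  rintro p q hpq ⟨hp, s, hs, hps⟩
  exact ⟨hclosed hp hs hps q hpq, p, hp, hpq.symm⟩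

theorem isStar_of_card_le_rDomNum (hG : G.Connected) (h : Fintype.card V ≤ rDomNum G) :
    IsStar G := by
  classical
  refine isStar_of_forall_adj_pendant hG fun a b hab => ?_
  by_contra! ⟨⟨a', haa', ha'b⟩, ⟨b', hbb', hb'a⟩⟩
  have hrd : IsRDomSet G ↑({a, b}ᶜ : Finset V) := by
    have hout : ∀ v, v ∉ (↑({a, b}ᶜ : Finset V) : Set V) ↔ v = a ∨ v = b := fun v => by
      rw [coe_compl, Set.notMem_compl_iff]; simp
    refine ⟨fun v hv => ?_, fun v hv => ?_⟩ <;> rcases (hout v).1 hv with rfl | rfl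
    · exact ⟨a', by simp [haa'.ne', ha'b], haa'⟩
    · exact ⟨b', by simp [hbb'.ne', hb'a], hbb'⟩
    · exact ⟨b, by simp, hab⟩
    · exact ⟨a, by simp, hab.symm⟩
  have hle := rDomNum_le hrd
  have hpair := card_le_univ ({a, b} : Finset V)
  rw [card_compl, card_pair hab.ne] at hle
  rw [card_pair hab.ne] at hpair
  omega

theorem isStar_or_of_rdrNum_eq (hG : G.Connected) (h : rdrNum G = domNum G + rDomNum G) :
    IsStar G ∨ (r2DomNum G = rDomNum G ∧ rDomNum G = domNum G) := by
  obtain ⟨f, hf, hsum⟩ := exists_isRDRD_sum_eq_rdrNum G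
  have hS2 := domNum_le (S := {v | 2 ≤ f v}) (by simpa using hf.isDomSet)
  have hS1 := rDomNum_le (S := {v | 1 ≤ f v}) (by simpa using hf.isRDomSet)
  have hcount := card_filter_add_card_filter_add_card_filter_le_sum f
  have hf2 : ∀ v, f v ≤ 2 := fun v => by
    by_contra hv
    have : 0 < #{v | 3 ≤ f v} := card_pos.2 ⟨v, mem_filter.2 ⟨mem_univ v, by omega⟩⟩
    omega
  have hR2 : IsR2DomSet G ↑(univ.filter fun v => 1 ≤ f v) := by
    simpa using hf.isR2DomSet hf2
  by_cases hone : ∃ u, f u = 1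
  · -- a vertex of weight 1 and its heavier neighbour form an edge inside `{v | 1 ≤ f v}`
    obtain ⟨u, hu⟩ := hone
    obtain ⟨s, hus, hs⟩ := hf.2.2.1 u hu
    have huniv := hR2.eq_univ_of_card_le_rDomNum hG (by omega)
      (mem_filter.2 ⟨mem_univ u, hu.ge⟩) (mem_filter.2 ⟨mem_univ s, by omega⟩) hus
    left
    exact isStar_of_card_le_rDomNum hG (by rw [← card_univ, ← huniv]; omega)
  · have hS : univ.filter (fun v => 1 ≤ f v) = univ.filter (fun v => 2 ≤ f v) := by
      ext v
      have : f v ≠ 1 := fun h => hone ⟨v, h⟩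
      simp only [mem_filter, mem_univ, true_and]
      constructor <;> intro <;> omega
    have hcard := congrArg card hS
    have := r2DomNum_le hR2
    have := rDomNum_le_r2DomNum G
    right
    omega

end Fintype

theorem stmt_9 {V : Type*} [Fintype V] (G : SimpleGraph V) (hconn : G.Connected) :
    rdrNum G = domNum G + rDomNum G ↔
      IsStar G ∨ (r2DomNum G = rDomNum G ∧ rDomNum G = domNum G) := by
  have hlower := domNum_add_rDomNum_le_rdrNum G
  refine ⟨isStar_or_of_rdrNum_eq hconn, ?_⟩
  rintro (hstar | ⟨h2, h1⟩)
  · obtain ⟨x, hx⟩ := hstar.exists_isUniversal hconn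
    have := rdrNum_le_card_add_one hx
    have := hstar.card_le_rDomNum
    have := hconn.nonempty
    have := one_le_domNum G
    omega
  · have := rdrNum_le_two_mul_r2DomNum G
    omega
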